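/- For all positive integers k and m, every finite simple graph G contains a set T of vertices with |T| ≤ k·m such that at least one of the following holds: (i) the induced subgraph of G on V(G)\T is either k-connected or complete; (ii) every connected component of the induced subgraph of G on V(G)\T has at most |V(G)\T| - m vertices. -/

import Mathlib

/-!
Keep a set `U` of surviving vertices, starting from `U = V`. While some component `D` of `G[U]`
misses fewer than `m` vertices of `U` and is neither `k`-connected nor complete, delete a separator
of `D` with fewer than `k` vertices. Each deletion creates one more component of `G[U]`, and all
components but `D` fit into the fewer than `m` vertices outside `D`, so there are at most `m - 1`
deletions, costing at most `(k - 1)(m - 1)` vertices. When the process stops, either every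
component is small, which is (ii), or deleting the fewer than `m` vertices outside `D` gives (i).
If a separator swallows all of `D`, then `G` itself has fewer than `km` vertices and `T = V(G)`
works.
-/

def KConnected {V : Type*} (k : ℕ) (G : SimpleGraph V) : Prop :=
  ∀ S : Set V, S.ncard < k → (G.induce (Sᶜ)).Connected

theorem Nat.sub_one_mul_add_add_le_mul {k m s d e : ℕ} (hsd : s ≤ d) (hdm : d < m)
    (he : e < k) : (k - 1) * s + d + e ≤ k * m := by
  obtain ⟨j, rfl⟩ : ∃ j, k = j + 1 := ⟨k - 1, by omega⟩
  rw [Nat.add_sub_cancel]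
  nlinarith

namespace SimpleGraph

variable {V : Type*} (G : SimpleGraph V)

def ReachableIn (U : Set V) (x y : V) : Prop :=
  ∃ p : G.Walk x y, ∀ z ∈ p.support, z ∈ U

def componentIn (U : Set V) (x : V) : Set V :=
  {y | G.ReachableIn U x y}

def IsKConnectedOrComplete (k : ℕ) (A : Set V) : Prop :=
  KConnected k (G.induce A) ∨ ∀ x y : A, x ≠ y → (G.induce A).Adj x y

def IsFragmented (m : ℕ) (A : Set V) : Prop :=
  ∀ comp : (G.induce A).ConnectedComponent, comp.supp.ncard + m ≤ A.ncard

variable {G} {U S : Set V} {x y z : V}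

namespace ReachableIn

theorem refl (hx : x ∈ U) : G.ReachableIn U x x :=
  ⟨.nil, by simpa using hx⟩

theorem symm (h : G.ReachableIn U x y) : G.ReachableIn U y x := by
  obtain ⟨p, hp⟩ := h
  exact ⟨p.reverse, by simpa using hp⟩

theorem trans (hxy : G.ReachableIn U x y) (hyz : G.ReachableIn U y z) :
    G.ReachableIn U x z := by
  obtain ⟨p, hp⟩ := hxy
  obtain ⟨q, hq⟩ := hyz
  refine ⟨p.append q, fun w hw => ?_⟩
  rcases (Walk.mem_support_append_iff p q).mp hw with hw | hw
  exacts [hp w hw, hq w hw]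

theorem mono {U' : Set V} (hUU' : U ⊆ U') (h : G.ReachableIn U x y) : G.ReachableIn U' x y := by
  obtain ⟨p, hp⟩ := h
  exact ⟨p, fun w hw => hUU' (hp w hw)⟩

theorem mem_left (h : G.ReachableIn U x y) : x ∈ U := by
  obtain ⟨p, hp⟩ := h
  exact hp x p.start_mem_support

theorem mem_right (h : G.ReachableIn U x y) : y ∈ U :=
  h.symm.mem_left

theorem componentIn_sdiff {x₀ : V} (hx : x ∈ G.componentIn U x₀)
    (h : G.ReachableIn (U \ S) x y) : G.ReachableIn (G.componentIn U x₀ \ S) x y := by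
  classical
  obtain ⟨p, hp⟩ := h
  refine ⟨p, fun w hw => ⟨?_, (hp w hw).2⟩⟩
  exact ReachableIn.trans hx
    ⟨p.takeUntil w hw, fun u hu => (hp u (p.support_takeUntil_subset_support hw hu)).1⟩

end ReachableIn

theorem reachable_induce_iff {x y : U} : (G.induce U).Reachable x y ↔ G.ReachableIn U x y := by
  constructor
  · rintro ⟨p⟩
    refine ⟨p.map (Embedding.induce U).toHom, fun w hw => ?_⟩
    obtain ⟨w', -, rfl⟩ := List.mem_map.mp ((Walk.support_map _ p) ▸ hw)
    exact w'.2
  · rintro ⟨p, hp⟩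
    exact ⟨p.induce U hp⟩

theorem componentIn_subset : G.componentIn U x ⊆ U :=
  fun _ hy => ReachableIn.mem_right hy

theorem reachableIn_of_mem_componentIn (hy : y ∈ G.componentIn U x) (hz : z ∈ G.componentIn U x) :
    G.ReachableIn U y z :=
  ReachableIn.trans (ReachableIn.symm hy) hz

theorem image_val_supp_connectedComponentMk (x : U) :
    Subtype.val '' ((G.induce U).connectedComponentMk x).supp = G.componentIn U x := by
  ext y
  constructor
  · rintro ⟨y, hy, rfl⟩
    exact reachable_induce_iff.mp (ConnectedComponent.exact hy).symm
  · intro hy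
    refine ⟨⟨y, ReachableIn.mem_right hy⟩, ?_, rfl⟩
    exact ConnectedComponent.sound (reachable_induce_iff.mpr (ReachableIn.symm hy))

theorem exists_ncard_sdiff_componentIn_lt_of_not_isFragmented [Finite V] {m : ℕ}
    (h : ¬ G.IsFragmented m U) : ∃ x, (U \ G.componentIn U x).ncard < m := by
  simp only [IsFragmented, not_forall, not_le] at h
  obtain ⟨comp, hcomp⟩ := h
  induction comp using ConnectedComponent.ind with | h x => ?_
  refine ⟨x, ?_⟩
  rw [← image_val_supp_connectedComponentMk]
  have := Set.ncard_sdiff_add_ncard_of_subset (Subtype.coe_image_subset U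
    ((G.induce U).connectedComponentMk x).supp)
  rw [Set.ncard_image_of_injective _ Subtype.val_injective] at this
  omega

noncomputable def induceInduceIso (A : Set V) (B : Set A) :
    (G.induce A).induce B ≃g G.induce (Subtype.val '' B) where
  toEquiv := Equiv.Set.image Subtype.val B Subtype.val_injective
  map_rel_iff' := Iff.rfl

theorem exists_separator_of_not_kConnected {k : ℕ} {D : Set V}
    (h : ¬ KConnected k (G.induce D)) :
    ∃ S ⊆ D, S.ncard < k ∧ ¬ (G.induce (D \ S)).Connected := by
  simp only [KConnected, not_forall] at h
  obtain ⟨S, hSk, hS⟩ := h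
  refine ⟨Subtype.val '' S, Subtype.coe_image_subset D S, ?_, ?_⟩
  · rwa [Set.ncard_image_of_injective _ Subtype.val_injective]
  · rw [← Set.image_val_compl, ← (induceInduceIso D Sᶜ).connected_iff]
    exact hS

theorem exists_not_reachableIn_of_not_connected {A : Set V} (hA : A.Nonempty)
    (h : ¬ (G.induce A).Connected) : ∃ a ∈ A, ∃ b ∈ A, ¬ G.ReachableIn A a b := by
  have : Nonempty A := hA.to_subtype
  simp only [connected_iff, this, and_true, Preconnected, not_forall] at h
  obtain ⟨a, b, hab⟩ := h
  exact ⟨a, a.2, b, b.2, fun h => hab (reachable_induce_iff.mpr h)⟩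

variable (G) in
/-- `W` picks one vertex from each of `s + 1` distinct components of `G[U]`, and the `s` splits
that produced them cost fewer than `k` deleted vertices each. -/
structure Stage (k : ℕ) (U W : Set V) (s : ℕ) : Prop where
  subset : W ⊆ U
  le_ncard : s + 1 ≤ W.ncard
  pairwise : W.Pairwise fun x y => ¬ G.ReachableIn U x y
  ncard_compl_le : Uᶜ.ncard ≤ (k - 1) * s

namespace Stage

variable {k s : ℕ} {W : Set V}

theorem univ_singleton (v : V) : G.Stage k Set.univ {v} 0 :=
  ⟨Set.subset_univ _, by simp, Set.pairwise_singleton _ _, by simp⟩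

variable [Finite V]

theorem le_ncard_witnesses_sdiff_componentIn (h : G.Stage k U W s) (x : V) :
    s ≤ (W \ G.componentIn U x).ncard := by
  have hinter : (W ∩ G.componentIn U x).ncard ≤ 1 := by
    refine (Set.ncard_le_one).mpr fun a ha b hb => ?_
    by_contra hab
    exact h.pairwise ha.1 hb.1 hab (reachableIn_of_mem_componentIn ha.2 hb.2)
  have := Set.ncard_inter_add_ncard_sdiff_eq_ncard W (G.componentIn U x)
  have := h.le_ncard
  omega

theorem le_ncard_sdiff_componentIn (h : G.Stage k U W s) (x : V) :
    s ≤ (U \ G.componentIn U x).ncard :=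
  (h.le_ncard_witnesses_sdiff_componentIn x).trans
    (Set.ncard_le_ncard (Set.sdiff_subset_sdiff_left h.subset))

theorem split (h : G.Stage k U W s) {x₀ a b : V} (hSD : S ⊆ G.componentIn U x₀)
    (hSk : S.ncard < k) (ha : a ∈ G.componentIn U x₀ \ S) (hb : b ∈ G.componentIn U x₀ \ S)
    (hab : ¬ G.ReachableIn (G.componentIn U x₀ \ S) a b) :
    G.Stage k (U \ S) (insert a (insert b (W \ G.componentIn U x₀))) (s + 1) := by
  have hsW := h.le_ncard_witnesses_sdiff_componentIn x₀
  set D := G.componentIn U x₀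
  have hDU : D ⊆ U := componentIn_subset
  have hne : a ≠ b := by
    rintro rfl
    exact hab (.refl ha)
  have hWD_diff : W \ D ⊆ U \ S := fun w hw => ⟨h.subset hw.1, fun hwS => hw.2 (hSD hwS)⟩
  have hcross : ∀ c ∈ D, ∀ w ∈ W \ D, ¬ G.ReachableIn (U \ S) c w := fun c hc w hw hcw =>
    hw.2 (ReachableIn.trans hc (hcw.mono Set.sdiff_subset))
  refine ⟨?_, ?_, ?_, ?_⟩
  · exact Set.insert_subset ⟨hDU ha.1, ha.2⟩ (Set.insert_subset ⟨hDU hb.1, hb.2⟩ hWD_diff)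
  · have hbW : b ∉ W \ D := fun hb' => hb'.2 hb.1
    have haW : a ∉ insert b (W \ D) := by
      rintro (rfl | ha')
      exacts [hne rfl, ha'.2 ha.1]
    rw [Set.ncard_insert_of_notMem haW, Set.ncard_insert_of_notMem hbW]
    omega
  · have hpairwise : (W \ D).Pairwise fun x y => ¬ G.ReachableIn (U \ S) x y :=
      fun x hx y hy hxy hr => h.pairwise hx.1 hy.1 hxy (hr.mono Set.sdiff_subset)
    refine Set.pairwise_insert.mpr ⟨Set.pairwise_insert.mpr ⟨hpairwise, ?_⟩, ?_⟩
    · exact fun w hw _ => ⟨hcross b hb.1 w hw, fun hr => hcross b hb.1 w hw hr.symm⟩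
    · rintro c (rfl | hc) -
      · exact ⟨fun hr => hab (hr.componentIn_sdiff ha.1),
          fun hr => hab (hr.symm.componentIn_sdiff ha.1)⟩
      · exact ⟨fun hr => hcross a ha.1 c hc hr, fun hr => hcross a ha.1 c hc hr.symm⟩
  · rw [Set.compl_sdiff]
    calc (S ∪ Uᶜ).ncard ≤ S.ncard + Uᶜ.ncard := Set.ncard_union_le _ _
      _ ≤ (k - 1) + (k - 1) * s := by have := h.ncard_compl_le; omega
      _ = (k - 1) * (s + 1) := by ring

theorem exists_compl_isKConnectedOrComplete_or_isFragmented (hk : 1 ≤ k) {m : ℕ}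
    {U W : Set V} {s : ℕ} (h : G.Stage k U W s) (hs : s ≤ m) :
    ∃ T : Set V, T.ncard ≤ k * m ∧
      (G.IsKConnectedOrComplete k Tᶜ ∨ G.IsFragmented m Tᶜ) := by
  by_cases hfrag : G.IsFragmented m U
  · refine ⟨Uᶜ, ?_, Or.inr (by rwa [compl_compl])⟩
    calc Uᶜ.ncard ≤ (k - 1) * s := h.ncard_compl_le
      _ ≤ k * m := Nat.mul_le_mul (Nat.sub_le k 1) hs
  obtain ⟨x₀, hm⟩ := exists_ncard_sdiff_componentIn_lt_of_not_isFragmented hfrag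
  set D := G.componentIn U x₀
  replace hm : (U \ D).ncard < m := hm
  have hsD : s ≤ (U \ D).ncard := h.le_ncard_sdiff_componentIn x₀
  have hDc : Dᶜ.ncard ≤ Uᶜ.ncard + (U \ D).ncard := by
    refine (Set.ncard_le_ncard fun x hx => ?_).trans (Set.ncard_union_le Uᶜ (U \ D))
    by_cases hxU : x ∈ U
    exacts [Or.inr ⟨hxU, hx⟩, Or.inl hxU]
  by_cases hgood : G.IsKConnectedOrComplete k D
  · refine ⟨Dᶜ, ?_, Or.inl (by rwa [compl_compl])⟩
    have := Nat.sub_one_mul_add_add_le_mul hsD hm hk (e := 0)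
    have := h.ncard_compl_le
    omega
  obtain ⟨S, hSD, hSk, hS⟩ := exists_separator_of_not_kConnected fun hD => hgood (Or.inl hD)
  rcases (D \ S).eq_empty_or_nonempty with hDS | hDS
  · refine ⟨Set.univ, ?_, Or.inl (Or.inr fun x => absurd x.2 (by simp))⟩
    have hDk : D.ncard < k := (Set.ncard_le_ncard (Set.sdiff_eq_empty.mp hDS)).trans_lt hSk
    have := Nat.sub_one_mul_add_add_le_mul hsD hm hDk
    have := h.ncard_compl_le
    have := Set.ncard_add_ncard_compl D
    rw [Set.ncard_univ]
    omega
  obtain ⟨a, ha, b, hb, hab⟩ := exists_not_reachableIn_of_not_connected hDS hS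
  exact (h.split hSD hSk ha hb hab).exists_compl_isKConnectedOrComplete_or_isFragmented hk
    (by omega)
termination_by m - s

end Stage

end SimpleGraph

theorem statement11_general {V : Type*} [Fintype V] (k m : ℕ) (hk : 1 ≤ k)
    (G : SimpleGraph V) :
    ∃ T : Set V, T.ncard ≤ k * m ∧
      ((KConnected k (G.induce (Tᶜ)) ∨
          ∀ x y : ↥(Tᶜ), x ≠ y → (G.induce (Tᶜ)).Adj x y) ∨
        ∀ comp : (G.induce (Tᶜ)).ConnectedComponent,
          comp.supp.ncard + m ≤ (Tᶜ : Set V).ncard) := by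
  rcases isEmpty_or_nonempty V with hV | ⟨⟨v⟩⟩
  · exact ⟨∅, by simp, Or.inl (Or.inr fun x => isEmptyElim (x : V))⟩
  · exact (SimpleGraph.Stage.univ_singleton v).exists_compl_isKConnectedOrComplete_or_isFragmented
      hk (Nat.zero_le m)

/-- For all positive integers `k` and `m`, every finite simple graph `G` has a set `T`
of vertices with `|T| ≤ k·m` such that either (i) the induced subgraph on `V(G) \ T` is
`k`-connected or complete, or (ii) every connected component of the induced subgraph on
`V(G) \ T` has at most `|V(G) \ T| - m` vertices (expressed subtraction-free). -/
theorem statement11 {V : Type*} [Fintype V] (k m : ℕ) (hk : 1 ≤ k) (hm : 1 ≤ m)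
    (G : SimpleGraph V) :
    ∃ T : Set V, T.ncard ≤ k * m ∧
      ((KConnected k (G.induce (Tᶜ)) ∨
          ∀ x y : ↥(Tᶜ), x ≠ y → (G.induce (Tᶜ)).Adj x y) ∨
        ∀ comp : (G.induce (Tᶜ)).ConnectedComponent,
          comp.supp.ncard + m ≤ (Tᶜ : Set V).ncard) :=
  statement11_general k m hk G
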